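/- Let 1 < q ≤ 2 and γ > 0, and let X be a real Banach space whose modulus of smoothness satisfies ρ(u) ≤ γ u^q for all u ≥ 0. Let (t_n)_{n≥1} be a weakness sequence with liminf_{n→∞} t_n > 0, let (δ_n)_{n≥0} be a perturbation sequence and (η_n)_{n≥1} a bounded error sequence with liminf_{n→∞} (δ_n + η_n) = 0. Then for every dictionary D in X, every f ∈ X, and every realization of the AWCGA of f with these sequences, ‖f_n‖ → 0. -/

import Mathlib

/-!
The best-approximation errors `E n` from `span {φ 1, …, φ n}` decrease to some `β ≥ 0`, and
`‖f n‖ ≤ (1 + η n) E n`, so it suffices to rule out `β > 0`. Smoothness of power type `q > 1`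
gives, for `‖x‖ ≥ β`, a unit vector `y` and `‖F‖ ≤ 1`,
`‖x - s y‖ ≤ ‖x‖ + (‖x‖ - F x) - s F y + O(s ^ q)`.
Applied along `G n`, whose line lies in `Φ n`, it shows that `F n` is almost nonnegative on `G n`
whenever `δ n + η n` is small. Then `F n (f) ≈ ‖f n‖ ≥ β`, so `F n` is at least `β / 2` on an
element `h = ∑ cᵢ gᵢ` of the span of the dictionary close to `f`, and is at least `β / (2 ∑ |cᵢ|)`
on some `g ∈ D`. The greedy choice of `φ (n + 1)` and the same estimate applied along it give
`E (n + 1) ≤ E n - c` for a fixed `c > 0`. As `δ n + η n` is small infinitely often, this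
contradicts the convergence of `E`.
-/

open Filter

noncomputable section

variable {X : Type} [NormedAddCommGroup X] [NormedSpace ℝ X]

/-- A dictionary: a symmetric set of unit-norm elements with dense linear span. -/
def IsDictionary (D : Set X) : Prop :=
  (∀ g ∈ D, ‖g‖ = 1) ∧ (∀ g ∈ D, -g ∈ D) ∧
    (Submodule.span ℝ D).topologicalClosure = ⊤

/-- The modulus of smoothness of `X`:
`ρ(u) = sup_{‖x‖=‖y‖=1} (‖x+uy‖+‖x-uy‖)/2 - 1`. -/
def modulusOfSmoothness (X : Type) [NormedAddCommGroup X] [NormedSpace ℝ X]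
    (u : ℝ) : ℝ :=
  sSup {r : ℝ | ∃ x y : X, ‖x‖ = 1 ∧ ‖y‖ = 1 ∧ r = (‖x + u • y‖ + ‖x - u • y‖) / 2 - 1}

/-- A weakness sequence: `0 ≤ t n ≤ 1` for `n ≥ 1`. -/
def IsWeaknessSeq (t : ℕ → ℝ) : Prop := ∀ n, 1 ≤ n → 0 ≤ t n ∧ t n ≤ 1

/-- A perturbation sequence: `0 ≤ δ n ≤ 1` for `n ≥ 0`. -/
def IsPerturbationSeq (δ : ℕ → ℝ) : Prop := ∀ n, 0 ≤ δ n ∧ δ n ≤ 1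

/-- An error sequence: `η n ≥ 0` for `n ≥ 1`. -/
def IsErrorSeq (η : ℕ → ℝ) : Prop := ∀ n, 1 ≤ n → 0 ≤ η n

/-- `a k = o(b k)` as `k → ∞`: for every `ε > 0` eventually `a k ≤ ε * b k`. -/
def IsLittleO (a b : ℕ → ℝ) : Prop := ∀ ε : ℝ, 0 < ε → ∃ N, ∀ k, N ≤ k → a k ≤ ε * b k

/-- `E_n`: the best approximation error of `f` from `Φ_n = span{φ_1, …, φ_n}`. -/
def approxError (f : X) (φ : ℕ → X) (n : ℕ) : ℝ :=
  sInf ((fun g => ‖f - g‖) '' (Submodule.span ℝ (φ '' Set.Icc 1 n) : Set X))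

/-- A realization of the AWCGA of `f` with respect to a dictionary `D`,
a weakness sequence `t`, a perturbation sequence `δ` and an error sequence `η`.
Indices are shifted so that step `n ≥ 1` of the algorithm is encoded by
the fields applied at `n - 1` (for `F`) and at `n` (for `φ`, `G`, `fs`). -/
structure AWCGARealization (D : Set X) (f : X) (t δ η : ℕ → ℝ) where
  F : ℕ → (X →L[ℝ] ℝ)
  φ : ℕ → X
  G : ℕ → X
  fs : ℕ → X
  fs_zero : fs 0 = f
  F_norm : ∀ n : ℕ, ‖F n‖ ≤ 1
  F_norming : ∀ n : ℕ, F n (fs n) ≥ (1 - δ n) * ‖fs n‖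
  φ_mem : ∀ n : ℕ, φ (n + 1) ∈ D
  φ_greedy : ∀ n : ℕ, F n (φ (n + 1)) ≥ t (n + 1) * sSup ((fun g => F n g) '' D)
  G_mem : ∀ n : ℕ, G (n + 1) ∈ Submodule.span ℝ (φ '' Set.Icc 1 (n + 1))
  G_near : ∀ n : ℕ, ‖f - G (n + 1)‖ ≤ (1 + η (n + 1)) * approxError f φ (n + 1)
  fs_succ : ∀ n : ℕ, fs (n + 1) = f - G (n + 1)

open Topology

lemma apply_le_norm_of_opNorm_le_one {F : X →L[ℝ] ℝ} (hF : ‖F‖ ≤ 1) (x : X) : F x ≤ ‖x‖ :=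
  (le_abs_self _).trans ((F.le_of_opNorm_le hF x).trans_eq (one_mul _))

lemma le_modulusOfSmoothness {x y : X} (hx : ‖x‖ = 1) (hy : ‖y‖ = 1) (u : ℝ) :
    (‖x + u • y‖ + ‖x - u • y‖) / 2 - 1 ≤ modulusOfSmoothness X u := by
  refine le_csSup ⟨|u|, ?_⟩ ⟨x, y, hx, hy, rfl⟩
  rintro _ ⟨x', y', hx', hy', rfl⟩
  have h₁ := norm_add_le x' (u • y')
  have h₂ := norm_sub_le x' (u • y')
  rw [norm_smul, hx', hy', Real.norm_eq_abs, mul_one] at h₁ h₂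
  linarith

lemma norm_add_smul_add_norm_sub_smul_le {x y : X} (hx : x ≠ 0) (hy : ‖y‖ = 1) (s : ℝ) :
    ‖x + s • y‖ + ‖x - s • y‖ ≤ 2 * ‖x‖ * (1 + modulusOfSmoothness X (s / ‖x‖)) := by
  have hx₀ : 0 < ‖x‖ := norm_pos_iff.2 hx
  set x₀ := ‖x‖⁻¹ • x
  have hx₀_norm : ‖x₀‖ = 1 := norm_smul_inv_norm hx
  have hscale : ∀ v : X, x₀ + v = ‖x‖⁻¹ • (x + ‖x‖ • v) := by
    intro v
    rw [smul_add, smul_smul, inv_mul_cancel₀ hx₀.ne', one_smul]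
  have key := le_modulusOfSmoothness hx₀_norm hy (s / ‖x‖)
  rw [sub_eq_add_neg x₀, hscale, hscale, norm_smul, norm_smul, smul_neg, smul_smul,
    mul_div_cancel₀ s hx₀.ne', norm_inv, norm_norm, ← sub_eq_add_neg] at key
  have : ‖x + s • y‖ + ‖x - s • y‖ = ‖x‖ * (‖x‖⁻¹ * ‖x + s • y‖ + ‖x‖⁻¹ * ‖x - s • y‖) := by
    field_simp
  rw [this]
  nlinarith

lemma norm_sub_smul_le {q γ β : ℝ} (hq : 1 ≤ q) (hγ : 0 ≤ γ)
    (hρ : ∀ u : ℝ, 0 ≤ u → modulusOfSmoothness X u ≤ γ * u ^ q)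
    (F : X →L[ℝ] ℝ) (hF : ‖F‖ ≤ 1) {x y : X} (hβ : 0 < β) (hx : β ≤ ‖x‖) (hy : ‖y‖ = 1)
    {s : ℝ} (hs : 0 ≤ s) :
    ‖x - s • y‖ ≤ 2 * ‖x‖ - F x - s * F y + 2 * γ * β ^ (1 - q) * s ^ q := by
  have hx₀ : 0 < ‖x‖ := hβ.trans_le hx
  have hsmooth := norm_add_smul_add_norm_sub_smul_le (norm_pos_iff.1 hx₀) hy s
  have hρx := hρ (s / ‖x‖) (by positivity)
  have hFx := apply_le_norm_of_opNorm_le_one hF (x + s • y)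
  rw [map_add, map_smul, smul_eq_mul] at hFx
  have hpow : ‖x‖ * (s / ‖x‖) ^ q = s ^ q * ‖x‖ ^ (1 - q) := by
    rw [Real.div_rpow hs hx₀.le, Real.rpow_sub hx₀, Real.rpow_one]
    ring
  have hβpow : ‖x‖ ^ (1 - q) ≤ β ^ (1 - q) := Real.rpow_le_rpow_of_nonpos hβ hx (by linarith)
  have : ‖x‖ * modulusOfSmoothness X (s / ‖x‖) ≤ γ * β ^ (1 - q) * s ^ q :=
    calc ‖x‖ * modulusOfSmoothness X (s / ‖x‖) ≤ ‖x‖ * (γ * (s / ‖x‖) ^ q) :=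
          mul_le_mul_of_nonneg_left hρx hx₀.le
      _ = γ * (s ^ q * ‖x‖ ^ (1 - q)) := by rw [← hpow]; ring
      _ ≤ γ * (s ^ q * β ^ (1 - q)) := by gcongr
      _ = γ * β ^ (1 - q) * s ^ q := by ring
  nlinarith

lemma eventually_mul_rpow_le_mul {q : ℝ} (hq : 1 < q) (K : ℝ) {c : ℝ} (hc : 0 < c) :
    ∀ᶠ s in 𝓝[>] 0, K * s ^ q ≤ c * s := by
  have hlim : Tendsto (fun s : ℝ => K * s ^ (q - 1)) (𝓝[>] 0) (𝓝 0) := by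
    have := ((Real.continuousAt_rpow_const 0 (q - 1) (Or.inr (by linarith))).const_mul K)
    rw [ContinuousAt, Real.zero_rpow (by linarith), mul_zero] at this
    exact this.mono_left nhdsWithin_le_nhds
  filter_upwards [hlim.eventually (gt_mem_nhds hc), self_mem_nhdsWithin] with s hs hs₀
  have : s ^ q = s ^ (q - 1) * s := by
    rw [← Real.rpow_add_one (ne_of_gt hs₀), sub_add_cancel]
  rw [this, ← mul_assoc]
  exact mul_le_mul_of_nonneg_right hs.le (le_of_lt hs₀)

section Dictionary

variable {D : Set X}

lemma abs_apply_le_sSup_image (hsymm : ∀ g ∈ D, -g ∈ D) (F : X →L[ℝ] ℝ)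
    (hbdd : BddAbove (F '' D)) {g : X} (hg : g ∈ D) : |F g| ≤ sSup (F '' D) := by
  have hneg := le_csSup hbdd (Set.mem_image_of_mem F (hsymm g hg))
  rw [map_neg] at hneg
  exact abs_le.2 ⟨by linarith, le_csSup hbdd (Set.mem_image_of_mem F hg)⟩

lemma sSup_image_nonneg (hsymm : ∀ g ∈ D, -g ∈ D) (F : X →L[ℝ] ℝ)
    (hbdd : BddAbove (F '' D)) : 0 ≤ sSup (F '' D) := by
  rcases D.eq_empty_or_nonempty with rfl | ⟨g, hg⟩
  · simp
  · exact (abs_nonneg _).trans (abs_apply_le_sSup_image hsymm F hbdd hg)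

lemma exists_apply_le_mul_sSup_image (hD : Bornology.IsBounded D) (hsymm : ∀ g ∈ D, -g ∈ D)
    {h : X} (hh : h ∈ Submodule.span ℝ D) :
    ∃ M > 0, ∀ F : X →L[ℝ] ℝ, F h ≤ M * sSup (F '' D) := by
  have hbdd (F : X →L[ℝ] ℝ) : BddAbove (F '' D) :=
    (F.lipschitz.isBounded_image hD).bddAbove
  have habs : ∃ M ≥ 0, ∀ F : X →L[ℝ] ℝ, |F h| ≤ M * sSup (F '' D) := by
    induction hh using Submodule.span_induction with
    | mem g hg =>
      exact ⟨1, zero_le_one, fun F ↦ by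
        simpa using abs_apply_le_sSup_image hsymm F (hbdd F) hg⟩
    | zero => exact ⟨0, le_rfl, fun F ↦ by simp⟩
    | add x y _ _ hx hy =>
      obtain ⟨Mx, hMx, hx⟩ := hx
      obtain ⟨My, hMy, hy⟩ := hy
      refine ⟨Mx + My, add_nonneg hMx hMy, fun F ↦ ?_⟩
      rw [map_add, add_mul]
      exact (abs_add_le _ _).trans (add_le_add (hx F) (hy F))
    | smul a x _ hx =>
      obtain ⟨M, hM, hx⟩ := hx
      refine ⟨|a| * M, mul_nonneg (abs_nonneg a) hM, fun F ↦ ?_⟩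
      rw [map_smul, smul_eq_mul, abs_mul, mul_assoc]
      exact mul_le_mul_of_nonneg_left (hx F) (abs_nonneg a)
  obtain ⟨M, hM, hMh⟩ := habs
  refine ⟨M + 1, by linarith, fun F ↦ ?_⟩
  have hS := sSup_image_nonneg hsymm F (hbdd F)
  linarith [le_abs_self (F h), hMh F]

lemma IsDictionary.exists_near_apply_le_mul_sSup_image (hD : IsDictionary D) (f : X) {ε : ℝ}
    (hε : 0 < ε) : ∃ h : X, ‖f - h‖ < ε ∧ ∃ M > 0, ∀ F : X →L[ℝ] ℝ, F h ≤ M * sSup (F '' D) := by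
  have hfD : f ∈ closure (Submodule.span ℝ D : Set X) := by
    rw [← Submodule.topologicalClosure_coe, hD.2.2]
    trivial
  obtain ⟨h, hh, hfh⟩ := Metric.mem_closure_iff.1 hfD ε hε
  have hDbdd : Bornology.IsBounded D :=
    (Metric.isBounded_closedBall (x := (0 : X)) (r := 1)).subset fun g hg ↦ by
      simp [hD.1 g hg]
  exact ⟨h, by rwa [← dist_eq_norm], exists_apply_le_mul_sSup_image hDbdd hD.2.1 hh⟩

end Dictionary

section ApproxError

variable {f : X} {φ : ℕ → X}

lemma approxError_le {n : ℕ} {g : X} (hg : g ∈ Submodule.span ℝ (φ '' Set.Icc 1 n)) :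
    approxError f φ n ≤ ‖f - g‖ :=
  csInf_le ⟨0, by rintro _ ⟨_, _, rfl⟩; positivity⟩ ⟨g, hg, rfl⟩

lemma approxError_nonneg (n : ℕ) : 0 ≤ approxError f φ n :=
  le_csInf ⟨_, 0, Submodule.zero_mem _, rfl⟩ (by rintro _ ⟨_, _, rfl⟩; positivity)

lemma approxError_le_norm (n : ℕ) : approxError f φ n ≤ ‖f‖ := by
  simpa using approxError_le (f := f) (Submodule.zero_mem (Submodule.span ℝ (φ '' Set.Icc 1 n)))

lemma approxError_antitone : Antitone (approxError f φ) := by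
  intro m n hmn
  refine le_csInf ⟨_, 0, Submodule.zero_mem _, rfl⟩ ?_
  rintro _ ⟨g, hg, rfl⟩
  exact approxError_le (Submodule.span_mono (Set.image_mono (Set.Icc_subset_Icc_right hmn)) hg)

end ApproxError

namespace AWCGARealization

variable {D : Set X} {f : X} {t δ η : ℕ → ℝ} (r : AWCGARealization D f t δ η)

lemma approxError_le_norm_fs (n : ℕ) : approxError f r.φ (n + 1) ≤ ‖r.fs (n + 1)‖ := by
  rw [r.fs_succ]
  exact approxError_le (r.G_mem n)

lemma norm_fs_le (hη : IsErrorSeq η) (n : ℕ) :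
    ‖r.fs (n + 1)‖ ≤ approxError f r.φ (n + 1) + η (n + 1) * ‖f‖ := by
  have hE := approxError_le_norm (f := f) (φ := r.φ) (n + 1)
  have hη₀ := hη (n + 1) (Nat.le_add_left 1 n)
  rw [r.fs_succ]
  nlinarith [r.G_near n]

lemma approxError_le_norm_fs_add_smul_G (n : ℕ) (s : ℝ) :
    approxError f r.φ (n + 1) ≤ ‖r.fs (n + 1) + s • r.G (n + 1)‖ := by
  have : r.fs (n + 1) + s • r.G (n + 1) = f - (1 - s) • r.G (n + 1) := by
    rw [r.fs_succ, sub_smul, one_smul]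
    abel
  rw [this]
  exact approxError_le (Submodule.smul_mem _ _ (r.G_mem n))

lemma approxError_succ_le_norm_fs_sub_smul_φ (n : ℕ) (s : ℝ) :
    approxError f r.φ (n + 2) ≤ ‖r.fs (n + 1) - s • r.φ (n + 2)‖ := by
  have : r.fs (n + 1) - s • r.φ (n + 2) = f - (r.G (n + 1) + s • r.φ (n + 2)) := by
    rw [r.fs_succ]
    abel
  rw [this]
  refine approxError_le (Submodule.add_mem _ ?_ (Submodule.smul_mem _ _ ?_))
  · exact Submodule.span_mono (Set.image_mono (Set.Icc_subset_Icc_right (by omega))) (r.G_mem n)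
  · exact Submodule.subset_span ⟨n + 2, ⟨by omega, le_rfl⟩, rfl⟩

lemma neg_apply_G_mul_le {q γ β : ℝ} (hq : 1 ≤ q) (hγ : 0 ≤ γ)
    (hρ : ∀ u : ℝ, 0 ≤ u → modulusOfSmoothness X u ≤ γ * u ^ q) (hη : IsErrorSeq η)
    (hβ : 0 < β) {n : ℕ} (hE : β ≤ approxError f r.φ (n + 1)) {s : ℝ} (hs : 0 ≤ s) :
    -r.F (n + 1) (r.G (n + 1)) * s ≤ ‖r.G (n + 1)‖ *
      (δ (n + 1) * ‖r.fs (n + 1)‖ + η (n + 1) * ‖f‖ + 2 * γ * β ^ (1 - q) * s ^ q) := by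
  set G := r.G (n + 1)
  rcases eq_or_ne G 0 with hG | hG
  · simp [hG]
  have hG₀ : 0 < ‖G‖ := norm_pos_iff.2 hG
  have hy : ‖-(‖G‖⁻¹ • G)‖ = 1 := by rw [norm_neg]; exact norm_smul_inv_norm hG
  have hstep := norm_sub_smul_le hq hγ hρ (r.F (n + 1)) (r.F_norm _) hβ
    (hE.trans (r.approxError_le_norm_fs n)) hy hs
  have hnear := r.approxError_le_norm_fs_add_smul_G n (s * ‖G‖⁻¹)
  rw [smul_neg, sub_neg_eq_add, smul_smul] at hstep
  have hFy : r.F (n + 1) (-(‖G‖⁻¹ • G)) = -(‖G‖⁻¹ * r.F (n + 1) G) := by simp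
  rw [hFy] at hstep
  have hbound : -r.F (n + 1) G * s * ‖G‖⁻¹ ≤
      δ (n + 1) * ‖r.fs (n + 1)‖ + η (n + 1) * ‖f‖ + 2 * γ * β ^ (1 - q) * s ^ q := by
    nlinarith [r.norm_fs_le hη n, r.F_norming (n + 1)]
  rw [mul_inv_le_iff₀ hG₀] at hbound
  linarith

lemma approxError_add_two_le {q γ β : ℝ} (hq : 1 ≤ q) (hγ : 0 ≤ γ)
    (hρ : ∀ u : ℝ, 0 ≤ u → modulusOfSmoothness X u ≤ γ * u ^ q) (hD : ∀ g ∈ D, ‖g‖ = 1)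
    (hη : IsErrorSeq η) (hβ : 0 < β) {n : ℕ} (hE : β ≤ approxError f r.φ (n + 1))
    {s : ℝ} (hs : 0 ≤ s) :
    approxError f r.φ (n + 2) ≤ approxError f r.φ (n + 1) + δ (n + 1) * ‖r.fs (n + 1)‖ +
      η (n + 1) * ‖f‖ - s * (t (n + 2) * sSup ((fun g => r.F (n + 1) g) '' D)) +
      2 * γ * β ^ (1 - q) * s ^ q := by
  have hstep := norm_sub_smul_le hq hγ hρ (r.F (n + 1)) (r.F_norm _) hβ
    (hE.trans (r.approxError_le_norm_fs n)) (hD _ (r.φ_mem (n + 1))) hs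
  have hgreedy := mul_le_mul_of_nonneg_left (r.φ_greedy (n + 1)) hs
  nlinarith [r.approxError_succ_le_norm_fs_sub_smul_φ n s, r.norm_fs_le hη n,
    r.F_norming (n + 1)]

lemma exists_forall_neg_apply_G_le {q γ β B κ : ℝ} (hq : 1 < q) (hγ : 0 ≤ γ)
    (hρ : ∀ u : ℝ, 0 ≤ u → modulusOfSmoothness X u ≤ γ * u ^ q) (hδ : IsPerturbationSeq δ)
    (hη : IsErrorSeq η) (hβ : 0 < β) (hE : ∀ n, β ≤ approxError f r.φ (n + 1)) (hB : 0 < B)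
    (hGB : ∀ n, ‖r.G (n + 1)‖ ≤ B) (hκ : 0 < κ) :
    ∃ ε > 0, ∀ n, δ (n + 1) * ‖r.fs (n + 1)‖ + η (n + 1) * ‖f‖ ≤ ε →
      -r.F (n + 1) (r.G (n + 1)) ≤ κ := by
  set K := 2 * γ * β ^ (1 - q)
  obtain ⟨s, hsK, hs⟩ := ((eventually_mul_rpow_le_mul hq K (c := κ / (2 * B)) (by positivity)).and
    self_mem_nhdsWithin).exists
  have hs₀ : 0 < s := hs
  refine ⟨κ * s / (2 * B), by positivity, fun n ha ↦ ?_⟩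
  have hsmall : δ (n + 1) * ‖r.fs (n + 1)‖ + η (n + 1) * ‖f‖ + K * s ^ q ≤ κ * s / B := by
    have : κ * s / B = κ * s / (2 * B) + κ / (2 * B) * s := by field_simp; ring
    linarith
  have hδ₀ : 0 ≤ δ (n + 1) * ‖r.fs (n + 1)‖ := mul_nonneg (hδ _).1 (norm_nonneg _)
  have hη₀ : 0 ≤ η (n + 1) * ‖f‖ := mul_nonneg (hη _ (Nat.le_add_left 1 n)) (norm_nonneg _)
  have hG := (r.neg_apply_G_mul_le hq.le hγ hρ hη hβ (hE n) hs₀.le).trans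
    (mul_le_mul (hGB n) hsmall (by positivity) hB.le)
  rw [mul_div_cancel₀ _ hB.ne'] at hG
  exact le_of_mul_le_mul_right hG hs₀

lemma apply_fs_add_apply_G_le (n : ℕ) (h : X) :
    r.F (n + 1) (r.fs (n + 1)) + r.F (n + 1) (r.G (n + 1)) ≤ r.F (n + 1) h + ‖f - h‖ := by
  have hFfh := apply_le_norm_of_opNorm_le_one (r.F_norm (n + 1)) (f - h)
  rw [← map_add, r.fs_succ, sub_add_cancel]
  rw [map_sub] at hFfh
  linarith

lemma exists_approxError_add_two_le_sub {q γ : ℝ} (hq : 1 < q) (hγ : 0 ≤ γ)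
    (hρ : ∀ u : ℝ, 0 ≤ u → modulusOfSmoothness X u ≤ γ * u ^ q) (hD : IsDictionary D)
    (hδ : IsPerturbationSeq δ) (hη : IsErrorSeq η) {β τ A : ℝ} (hβ : 0 < β) (hτ : 0 < τ)
    (hE : ∀ n, β ≤ approxError f r.φ n) (hA : ∀ n, ‖r.fs (n + 1)‖ ≤ A) :
    ∃ ε > 0, ∃ c > 0, ∀ n, δ (n + 1) * ‖r.fs (n + 1)‖ + η (n + 1) * ‖f‖ ≤ ε →
      τ ≤ t (n + 2) → approxError f r.φ (n + 2) ≤ approxError f r.φ (n + 1) - c := by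
  have hGB (n : ℕ) : ‖r.G (n + 1)‖ ≤ ‖f‖ + A := by
    rw [← sub_sub_cancel f (r.G (n + 1)), ← r.fs_succ]
    linarith [norm_sub_le f (r.fs (n + 1)), hA n]
  have hB : 0 < ‖f‖ + A := by linarith [norm_nonneg f, hE 1, r.approxError_le_norm_fs 0, hA 0]
  obtain ⟨ε, hε, hFG⟩ := r.exists_forall_neg_apply_G_le hq hγ hρ hδ hη hβ (fun n ↦ hE (n + 1)) hB
    hGB (κ := β / 4) (by positivity)
  obtain ⟨h, hfh, M, hM, hMh⟩ := hD.exists_near_apply_le_mul_sSup_image f (ε := β / 8)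
    (by positivity)
  set σ := β / (2 * M)
  obtain ⟨s, hsK, hs⟩ := ((eventually_mul_rpow_le_mul hq (2 * γ * β ^ (1 - q))
    (c := τ * σ / 4) (by positivity)).and self_mem_nhdsWithin).exists
  have hs₀ : 0 < s := hs
  refine ⟨min ε (min (β / 8) (s * τ * σ / 4)), by positivity, s * τ * σ / 2, by positivity,
    fun n ha ht ↦ ?_⟩
  have hδ₀ : 0 ≤ δ (n + 1) * ‖r.fs (n + 1)‖ := mul_nonneg (hδ _).1 (norm_nonneg _)
  have hη₀ : 0 ≤ η (n + 1) * ‖f‖ := mul_nonneg (hη _ (Nat.le_add_left 1 n)) (norm_nonneg _)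
  have hσS : σ ≤ sSup ((fun g => r.F (n + 1) g) '' D) := by
    have hFh : β / 2 ≤ M * sSup ((fun g => r.F (n + 1) g) '' D) := by
      nlinarith [hMh (r.F (n + 1)), r.F_norming (n + 1), hE (n + 1), r.approxError_le_norm_fs n,
        r.apply_fs_add_apply_G_le n h, hFG n (ha.trans (min_le_left _ _)),
        ha.trans ((min_le_right _ _).trans (min_le_left _ _))]
    rw [div_le_iff₀' (by positivity)]
    linarith
  have htS : τ * σ ≤ t (n + 2) * sSup ((fun g => r.F (n + 1) g) '' D) :=
    mul_le_mul ht hσS (by positivity) (hτ.le.trans ht)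
  have hstep := r.approxError_add_two_le hq.le hγ hρ hD.1 hη hβ (hE (n + 1)) hs₀.le
  nlinarith [mul_le_mul_of_nonneg_left htS hs₀.le,
    ha.trans ((min_le_right _ _).trans (min_le_right _ _))]

lemma tendsto_approxError {q γ : ℝ} (hq : 1 < q) (hγ : 0 ≤ γ)
    (hρ : ∀ u : ℝ, 0 ≤ u → modulusOfSmoothness X u ≤ γ * u ^ q) (ht : IsWeaknessSeq t)
    (htpos : 0 < atTop.liminf t) (hδ : IsPerturbationSeq δ) (hη : IsErrorSeq η) {C : ℝ}
    (hC : ∀ m, 1 ≤ m → η m ≤ C) (hliminf : atTop.liminf (fun m => δ m + η m) = 0)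
    (hD : IsDictionary D) :
    Tendsto (approxError f r.φ) atTop (𝓝 0) := by
  set E := approxError f r.φ
  have hbdd : BddBelow (Set.range E) := ⟨0, by rintro _ ⟨n, rfl⟩; exact approxError_nonneg n⟩
  have hlim : Tendsto E atTop (𝓝 (⨅ n, E n)) := tendsto_atTop_ciInf approxError_antitone hbdd
  set β := ⨅ n, E n
  suffices hβ₀ : β = 0 by rwa [hβ₀] at hlim
  by_contra hβ₀
  have hβ : 0 < β := lt_of_le_of_ne (le_ciInf approxError_nonneg) (Ne.symm hβ₀)
  have hβE (n : ℕ) : β ≤ E n := ciInf_le hbdd n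
  set A := (1 + max C 0) * ‖f‖
  have hfA : ‖f‖ ≤ A := le_mul_of_one_le_left (norm_nonneg f) (by linarith [le_max_right C 0])
  have hA (n : ℕ) : ‖r.fs (n + 1)‖ ≤ A := by
    have hηC : η (n + 1) ≤ max C 0 := (hC _ (Nat.le_add_left 1 n)).trans (le_max_left C 0)
    nlinarith [r.norm_fs_le hη n, approxError_le_norm (f := f) (φ := r.φ) (n + 1), norm_nonneg f]
  have hA₀ : 0 < A := hβ.trans_le ((hβE 0).trans ((approxError_le_norm 0).trans hfA))
  set τ := atTop.liminf t / 2
  obtain ⟨ε, hε, c, hc, hdrop⟩ :=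
    r.exists_approxError_add_two_le_sub hq hγ hρ hD hδ hη hβ (τ := τ) (by positivity) hβE hA
  have hsmall : ∃ᶠ n in atTop, δ (n + 1) + η (n + 1) < ε / A := by
    refine frequently_lt_of_liminf_lt (isCoboundedUnder_ge_of_eventually_le atTop
      (x := 1 + max C 0) (Eventually.of_forall fun n ↦ ?_)) ?_
    · linarith [(hδ (n + 1)).2, (hC _ (Nat.le_add_left 1 n)).trans (le_max_left C 0)]
    · rw [liminf_nat_add (fun m => δ m + η m) 1, hliminf]
      positivity
  have hτ : ∀ᶠ n in atTop, τ < t (n + 2) :=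
    (tendsto_add_atTop_nat 2).eventually (eventually_lt_of_lt_liminf (u := t) (half_lt_self htpos)
      ⟨0, eventually_atTop.2 ⟨1, fun n hn ↦ (ht n hn).1⟩⟩)
  have hsettle : ∀ᶠ n in atTop, E (n + 1) - c < E (n + 2) := by
    have hdiff : Tendsto (fun n ↦ E (n + 2) - E (n + 1)) atTop (𝓝 0) := by
      simpa using (hlim.comp (tendsto_add_atTop_nat 2)).sub (hlim.comp (tendsto_add_atTop_nat 1))
    filter_upwards [hdiff.eventually (lt_mem_nhds (neg_lt_zero.2 hc))] with n hn
    linarith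
  obtain ⟨n, hn, hτn, hsn⟩ := (hsmall.and_eventually (hτ.and hsettle)).exists
  have ha : δ (n + 1) * ‖r.fs (n + 1)‖ + η (n + 1) * ‖f‖ ≤ ε := by
    have hsum : (δ (n + 1) + η (n + 1)) * A < ε := (lt_div_iff₀ hA₀).1 hn
    nlinarith [hA n, (hδ (n + 1)).1, hη (n + 1) (Nat.le_add_left 1 n)]
  linarith [hdrop n ha hτn.le]

end AWCGARealization

theorem stmt_2_general {X : Type} [NormedAddCommGroup X] [NormedSpace ℝ X]
    (q γ : ℝ) (hq1 : 1 < q) (hγ : 0 < γ)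
    (hρ : ∀ u : ℝ, 0 ≤ u → modulusOfSmoothness X u ≤ γ * u ^ q)
    (t δ η : ℕ → ℝ) (ht : IsWeaknessSeq t) (htpos : 0 < atTop.liminf t)
    (hδ : IsPerturbationSeq δ)
    (hη : IsErrorSeq η) (hηbdd : ∃ C : ℝ, ∀ m, 1 ≤ m → η m ≤ C)
    (hliminf : atTop.liminf (fun m => δ m + η m) = 0)
    (D : Set X) (hD : IsDictionary D)
    (f : X) (r : AWCGARealization D f t δ η) :
    Tendsto (fun m => ‖r.fs m‖) atTop (nhds 0) := by
  obtain ⟨C, hC⟩ := hηbdd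
  have hE := r.tendsto_approxError hq1 hγ.le hρ ht htpos hδ hη hC hliminf hD
  have hbound : ∀ᶠ m in atTop, ‖r.fs m‖ ≤ (1 + C) * approxError f r.φ m := by
    refine eventually_atTop.2 ⟨1, fun m hm ↦ ?_⟩
    obtain ⟨n, rfl⟩ := Nat.exists_eq_add_of_le' hm
    rw [r.fs_succ]
    exact (r.G_near n).trans (mul_le_mul_of_nonneg_right (by linarith [hC (n + 1) hm])
      (approxError_nonneg _))
  simpa using squeeze_zero' (Eventually.of_forall fun _ ↦ norm_nonneg _) hbound
    (by simpa using hE.const_mul (1 + C))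

/-- Convergence of the AWCGA when `liminf t_n > 0` and `liminf (δ_n + η_n) = 0`. -/
theorem stmt_2 {X : Type} [NormedAddCommGroup X] [NormedSpace ℝ X] [CompleteSpace X]
    (q γ : ℝ) (hq1 : 1 < q) (hq2 : q ≤ 2) (hγ : 0 < γ)
    (hρ : ∀ u : ℝ, 0 ≤ u → modulusOfSmoothness X u ≤ γ * u ^ q)
    (t δ η : ℕ → ℝ) (ht : IsWeaknessSeq t) (htpos : 0 < atTop.liminf t)
    (hδ : IsPerturbationSeq δ)
    (hη : IsErrorSeq η) (hηbdd : ∃ C : ℝ, ∀ m, 1 ≤ m → η m ≤ C)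
    (hliminf : atTop.liminf (fun m => δ m + η m) = 0)
    (D : Set X) (hD : IsDictionary D)
    (f : X) (r : AWCGARealization D f t δ η) :
    Tendsto (fun m => ‖r.fs m‖) atTop (nhds 0) :=
  stmt_2_general q γ hq1 hγ hρ t δ η ht htpos hδ hη hηbdd hliminf D hD f r
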